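/- arXiv:1105.1728 — 3 statements merged into one kernel-verified Lean document; each statement's English description precedes it below -/
import Mathlib

section
/- Let ℓ₁, …, ℓ_N ∈ ℤ^d and let K∞ be the smallest subset of ℤ^d containing {0, ℓ₁, …, ℓ_N} and closed under (m,n) ↦ 2m − n. Then K∞ equals the set of all integer linear combinations ∑ α_s ℓ_s in which at most one coefficient α_s is odd. -/
/-!
Reflecting through points of `K ∋ 0` gives `x ↦ -x` and `x ↦ 2 • g + x` for `g ∈ K`, so the
translation stabilizer of `K` is a subgroup containing every `2 • ℓ s`. Splitting
`α = 2 * (α / 2) + α % 2`, a combination with at most one odd coefficient is such a translate of `0`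
or of a single `ℓ s`. Conversely `2 • m - n` has the same odd coefficients as `n`, so these
combinations themselves form a reflection-closed set.
-/

open Pointwise

variable {G : Type*} [AddCommGroup G] {ι : Type*} [Fintype ι]

section ReflectionClosed

variable {K : Set G}

theorem two_zsmul_mem_stabilizer (h0 : (0 : G) ∈ K)
    (hK : ∀ m ∈ K, ∀ n ∈ K, (2 : ℤ) • m - n ∈ K) {g : G} (hg : g ∈ K) :
    (2 : ℤ) • g ∈ AddAction.stabilizer G K := by
  have neg_mem : ∀ x ∈ K, -x ∈ K := fun x hx => by simpa using hK 0 h0 x hx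
  refine AddAction.mem_stabilizer_set.2 fun b => ⟨fun hb => ?_, fun hb => ?_⟩
  · simpa using neg_mem _ (hK g hg _ hb)
  · simpa [vadd_eq_add] using hK g hg _ (neg_mem b hb)

theorem sum_two_mul_zsmul_add_mem (h0 : (0 : G) ∈ K)
    (hK : ∀ m ∈ K, ∀ n ∈ K, (2 : ℤ) • m - n ∈ K) {ℓ : ι → G} (hℓ : ∀ s, ℓ s ∈ K)
    (β : ι → ℤ) {x : G} (hx : x ∈ K) : ∑ s, (2 * β s) • ℓ s + x ∈ K := by
  have : ∑ s, (2 * β s) • ℓ s ∈ AddAction.stabilizer G K := by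
    refine AddSubgroup.sum_mem _ fun s _ => ?_
    rw [mul_comm, mul_zsmul]
    exact AddSubgroup.zsmul_mem _ (two_zsmul_mem_stabilizer h0 hK (hℓ s)) _
  exact (AddAction.mem_stabilizer_set.1 this x).2 hx

end ReflectionClosed

theorem sum_emod_two_zsmul_mem_insert_zero_range (ℓ : ι → G) {α : ι → ℤ}
    (hα : {s | Odd (α s)}.Subsingleton) :
    ∑ s, (α s % 2) • ℓ s ∈ insert 0 (Set.range ℓ) := by
  by_cases h : ∃ s₀, Odd (α s₀)
  · obtain ⟨s₀, hs₀⟩ := h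
    refine Or.inr ⟨s₀, ?_⟩
    rw [Finset.sum_eq_single s₀, Int.odd_iff.1 hs₀, one_smul]
    · intro s _ hs
      rw [Int.even_iff.1 (Int.not_odd_iff_even.1 fun h => hs (hα h hs₀)), zero_smul]
    · simp
  · push Not at h
    refine Or.inl (Finset.sum_eq_zero fun s _ => ?_)
    rw [Int.even_iff.1 (Int.not_odd_iff_even.1 (h s)), zero_smul]

def combinationsAtMostOneOdd (ℓ : ι → G) : Set G :=
  {v | ∃ α : ι → ℤ, v = ∑ s, α s • ℓ s ∧ {s | Odd (α s)}.Subsingleton}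

theorem zero_mem_combinationsAtMostOneOdd (ℓ : ι → G) : 0 ∈ combinationsAtMostOneOdd ℓ :=
  ⟨0, by simp, by simp [Set.subsingleton_empty]⟩

theorem mem_combinationsAtMostOneOdd_self (ℓ : ι → G) (s : ι) :
    ℓ s ∈ combinationsAtMostOneOdd ℓ := by
  classical
  refine ⟨Pi.single s 1, by simp [Pi.single_apply, ite_smul], ?_⟩
  refine (Set.subsingleton_singleton (a := s)).anti fun t ht => ?_
  by_contra hts
  simp [Pi.single_eq_of_ne hts] at ht

theorem two_zsmul_sub_mem_combinationsAtMostOneOdd {ℓ : ι → G} {m n : G}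
    (hm : m ∈ combinationsAtMostOneOdd ℓ) (hn : n ∈ combinationsAtMostOneOdd ℓ) :
    (2 : ℤ) • m - n ∈ combinationsAtMostOneOdd ℓ := by
  obtain ⟨α, rfl, -⟩ := hm
  obtain ⟨β, rfl, hβ⟩ := hn
  refine ⟨2 * α - β, by simp [Finset.smul_sum, sub_smul, mul_smul], ?_⟩
  have odd_iff : ∀ s, Odd ((2 * α - β) s) ↔ Odd (β s) := fun s => by
    simp only [Pi.sub_apply, Pi.mul_apply, Pi.ofNat_apply, Int.odd_iff]; omega
  simpa only [odd_iff] using hβ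

theorem combinationsAtMostOneOdd_subset {ℓ : ι → G} {K : Set G}
    (hsub : insert 0 (Set.range ℓ) ⊆ K) (hK : ∀ m ∈ K, ∀ n ∈ K, (2 : ℤ) • m - n ∈ K) :
    combinationsAtMostOneOdd ℓ ⊆ K := by
  rintro _ ⟨α, rfl, hα⟩
  have split : ∑ s, α s • ℓ s = ∑ s, (2 * (α s / 2)) • ℓ s + ∑ s, (α s % 2) • ℓ s := by
    rw [← Finset.sum_add_distrib]
    simp only [← add_smul, Int.mul_ediv_add_emod]
  rw [split]
  exact sum_two_mul_zsmul_add_mem (hsub (Set.mem_insert _ _)) hK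
    (fun s => hsub (Set.mem_insert_of_mem _ ⟨s, rfl⟩)) _
    (hsub (sum_emod_two_zsmul_mem_insert_zero_range ℓ hα))

/-- For `ℓ₁, …, ℓ_N ∈ ℤ^d`, the smallest subset of `ℤ^d` containing `{0, ℓ₁, …, ℓ_N}`
and closed under `(m, n) ↦ 2•m - n` equals the set of all integer linear combinations
`∑ α_s • ℓ_s` with at most one odd coefficient. -/
theorem closure_eq_combinations_at_most_one_odd (d N : ℕ) (ℓ : Fin N → (Fin d → ℤ)) :
    ⋂₀ {K : Set (Fin d → ℤ) |
        insert (0 : Fin d → ℤ) (Set.range ℓ) ⊆ K ∧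
        ∀ m ∈ K, ∀ n ∈ K, (2 : ℤ) • m - n ∈ K} =
      {v : Fin d → ℤ | ∃ α : Fin N → ℤ,
        v = ∑ s, α s • ℓ s ∧ {s : Fin N | Odd (α s)}.Subsingleton} := by
  refine subset_antisymm (Set.sInter_subset_of_mem ⟨?_, ?_⟩) ?_
  · exact Set.insert_subset (zero_mem_combinationsAtMostOneOdd ℓ)
      (Set.range_subset_iff.2 (mem_combinationsAtMostOneOdd_self ℓ))
  · exact fun m hm n hn => two_zsmul_sub_mem_combinationsAtMostOneOdd hm hn
  · exact Set.subset_sInter fun K ⟨hsub, hK⟩ => combinationsAtMostOneOdd_subset hsub hK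
end

section
/- Let k₁, …, k_d ∈ ℤ^d be vectors whose determinant (as columns of a d×d integer matrix) equals ±1. Then the 2^d-element set consisting of all sums ∑_{j∈J} k_j over subsets J ⊆ {1,…,d} (including the empty sum 0) is saturating in ℤ^d, i.e. its closure under (m,n) ↦ 2m − n is all of ℤ^d. -/
/-!
A set `K` closed under the reflections `(m, n) ↦ 2m - n` that contains `x` and `x + w` contains
the whole progression `x + ℤ w`. Adjoining the vectors `k_j` one at a time, this turns the
`2^d` subset sums into all integer combinations `∑ c_j k_j`, and these exhaust `ℤ^d` because the
matrix with columns `k_j` is invertible over `ℤ`.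
-/

section ReflectionClosed

variable {M : Type*} [AddCommGroup M] {K : Set M}

theorem add_zsmul_mem_of_reflection_closed (hK : ∀ m ∈ K, ∀ n ∈ K, (2 : ℤ) • m - n ∈ K)
    {x w : M} (hx : x ∈ K) (hxw : x + w ∈ K) (a : ℤ) : x + a • w ∈ K := by
  suffices h : ∀ a : ℤ, x + a • w ∈ K ∧ x + (a + 1) • w ∈ K from (h a).1
  intro a
  induction a using Int.induction_on with
  | zero => exact ⟨by simpa using hx, by simpa using hxw⟩
  | succ n ih =>
    refine ⟨ih.2, ?_⟩
    convert hK _ ih.2 _ ih.1 using 1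
    module
  | pred n ih =>
    refine ⟨?_, by simpa using ih.1⟩
    convert hK _ ih.1 _ ih.2 using 1
    module

theorem add_sum_zsmul_mem_of_reflection_closed {ι : Type*} [DecidableEq ι]
    (hK : ∀ m ∈ K, ∀ n ∈ K, (2 : ℤ) • m - n ∈ K) (k : ι → M) (s : Finset ι) {x : M}
    (hsub : ∀ J ⊆ s, x + ∑ j ∈ J, k j ∈ K) (c : ι → ℤ) : x + ∑ j ∈ s, c j • k j ∈ K := by
  induction s using Finset.induction_on generalizing x with
  | empty => simpa using hsub ∅ subset_rfl
  | insert i s his ih =>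
    have hshift : ∀ J ⊆ s, x + c i • k i + ∑ j ∈ J, k j ∈ K := by
      intro J hJ
      have h₀ := hsub J (hJ.trans (Finset.subset_insert i s))
      have h₁ := hsub (insert i J) (Finset.insert_subset_insert i hJ)
      rw [Finset.sum_insert fun hi => his (hJ hi)] at h₁
      convert add_zsmul_mem_of_reflection_closed hK h₀ (w := k i) (by convert h₁ using 1; abel)
        (c i) using 1
      abel
    rw [Finset.sum_insert his, ← add_assoc]
    exact ih hshift

end ReflectionClosed

theorem exists_sum_smul_eq_of_isUnit_det {R ι : Type*} [CommRing R] [Fintype ι] [DecidableEq ι]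
    (k : ι → ι → R) (hk : IsUnit (Matrix.of fun i j => k j i).det) (v : ι → R) :
    ∃ c : ι → R, ∑ j, c j • k j = v := by
  have hT : IsUnit (Matrix.of k) := by
    rwa [Matrix.isUnit_iff_isUnit_det, ← Matrix.det_transpose]
  obtain ⟨c, hc⟩ := Matrix.vecMul_surjective_iff_isUnit.mpr hT v
  exact ⟨c, hc ▸ (Matrix.vecMul_eq_sum c (Matrix.of k)).symm⟩

/-- If the vectors `k₁, …, k_d ∈ ℤ^d`, viewed as columns of a `d × d` integer matrix,
have determinant `±1`, then the `2^d`-element set of all subset sums `∑_{j ∈ J} k_j`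
(`J ⊆ {1, …, d}`, including the empty sum `0`) is saturating in `ℤ^d`: its closure
under `(m, n) ↦ 2•m - n` is all of `ℤ^d`. -/
theorem subset_sums_saturating (d : ℕ) (k : Fin d → (Fin d → ℤ))
    (hdet : (Matrix.of fun i j => k j i).det = 1 ∨ (Matrix.of fun i j => k j i).det = -1) :
    ⋂₀ {K : Set (Fin d → ℤ) |
        {v : Fin d → ℤ | ∃ J : Finset (Fin d), v = ∑ j ∈ J, k j} ⊆ K ∧
        ∀ m ∈ K, ∀ n ∈ K, (2 : ℤ) • m - n ∈ K} = Set.univ := by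
  refine Set.eq_univ_of_forall fun v => Set.mem_sInter.mpr ?_
  rintro K ⟨hsums, hK⟩
  have hunit : IsUnit (Matrix.of fun i j => k j i).det := by
    rcases hdet with h | h <;> simp [h]
  obtain ⟨c, rfl⟩ := exists_sum_smul_eq_of_isUnit_det k hunit v
  simpa using add_sum_zsmul_mem_of_reflection_closed hK k Finset.univ (x := 0)
    (fun J _ => by simpa using hsums ⟨J, rfl⟩) c
end

section
/- The set of all vertices of the unit cube, i.e. all vectors in ℤ^d with every coordinate equal to 0 or 1, is saturating in ℤ^d: its closure under the operation (m,n) ↦ 2m − n equals ℤ^d. -/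
/-!
Every `v ∈ ℤ^d` is the reflection `2 • w - r` of its parity vector `r = v % 2`, a cube vertex,
in the vector `w = (v + 1) / 2` of rounded-up halves. Halving does not increase any `|vᵢ|` and
strictly decreases it unless `vᵢ ∈ {0, 1}`, so induction on `∑ |vᵢ|` ends at the cube.
-/

namespace Int

lemma two_mul_add_one_ediv_two_sub_emod_two (a : ℤ) : 2 * ((a + 1) / 2) - a % 2 = a := by
  omega

lemma natAbs_add_one_ediv_two_le (a : ℤ) : ((a + 1) / 2).natAbs ≤ a.natAbs := by
  omega

lemma natAbs_add_one_ediv_two_lt (a : ℤ) (ha : ¬(a = 0 ∨ a = 1)) :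
    ((a + 1) / 2).natAbs < a.natAbs := by
  omega

end Int

def unitCube (ι : Type*) : Set (ι → ℤ) := {v | ∀ i, v i = 0 ∨ v i = 1}

section UnitCube

variable {ι : Type*}

lemma emod_two_mem_unitCube (v : ι → ℤ) : (fun i => v i % 2) ∈ unitCube ι :=
  fun i => Int.emod_two_eq_zero_or_one (v i)

lemma two_smul_ceilHalf_sub_emod_two (v : ι → ℤ) :
    (2 : ℤ) • (fun i => (v i + 1) / 2) - (fun i => v i % 2) = v := by
  funext i
  exact Int.two_mul_add_one_ediv_two_sub_emod_two (v i)

lemma sum_natAbs_ceilHalf_lt [Fintype ι] {v : ι → ℤ} (hv : v ∉ unitCube ι) :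
    ∑ i, ((v i + 1) / 2).natAbs < ∑ i, (v i).natAbs := by
  obtain ⟨i, hi⟩ := not_forall.mp hv
  exact Finset.sum_lt_sum (fun j _ => Int.natAbs_add_one_ediv_two_le (v j))
    ⟨i, Finset.mem_univ i, Int.natAbs_add_one_ediv_two_lt (v i) hi⟩

theorem eq_univ_of_unitCube_subset [Finite ι] {K : Set (ι → ℤ)} (hcube : unitCube ι ⊆ K)
    (hrefl : ∀ m ∈ K, ∀ n ∈ K, (2 : ℤ) • m - n ∈ K) : K = Set.univ := by
  have := Fintype.ofFinite ι
  refine Set.eq_univ_of_forall fun v => ?_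
  induction v using (measure fun v : ι → ℤ => ∑ i, (v i).natAbs).wf.induction with
  | _ v ih =>
    by_cases hv : v ∈ unitCube ι
    · exact hcube hv
    · rw [← two_smul_ceilHalf_sub_emod_two v]
      exact hrefl _ (ih _ (sum_natAbs_ceilHalf_lt hv)) _ (hcube (emod_two_mem_unitCube v))

end UnitCube

/-- The set of vertices of the unit cube (all vectors in `ℤ^d` with coordinates `0` or `1`)
is saturating in `ℤ^d`: its closure under `(m, n) ↦ 2•m - n` equals `ℤ^d`. -/
theorem cube_vertices_saturating (d : ℕ) :
    ⋂₀ {K : Set (Fin d → ℤ) |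
        {v : Fin d → ℤ | ∀ i, v i = 0 ∨ v i = 1} ⊆ K ∧
        ∀ m ∈ K, ∀ n ∈ K, (2 : ℤ) • m - n ∈ K} = Set.univ :=
  Set.eq_univ_of_forall fun v => Set.mem_sInter.mpr fun _ ⟨hcube, hrefl⟩ =>
    (eq_univ_of_unitCube_subset hcube hrefl).symm ▸ Set.mem_univ v
end
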